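/- Let v > 0, Δt > 0, t ∈ [m_0Δt,(m_0+1)Δt), and Φ piecewise constant and positive on the Δt-grid. Define the accumulation variables Φ̂_0 = ((m_0+1)Δt - t)Φ(m_0Δt) and Φ̂_m = Δt·Φ((m_0+m)Δt) for m ≥ 1. If m_τ ≥ m_0 and τ̃ := (v - Σ_{m=0}^{m_τ-m_0-1} Φ̂_m)/Φ(m_τΔt) is such that the pair (m_τ, τ̃) satisfies the stopping condition Σ_{m=0}^{m_τ-m_0-1} Φ̂_m + τ̃·Φ(m_τΔt) = v with m_τΔt ≤ tσ ≤ tσ + τ̃ < (m_τ+1)Δt, where tσ := t if m_τ = m_0 and tσ := m_τΔt otherwise, then the resulting event time t + τ, with τ defined by t + τ = tσ + τ̃, is the unique solution of ∫_t^{t+τ} Φ(t')dt' = v. -/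

import Mathlib

open MeasureTheory


lemma cell_ae (Φ : ℝ → ℝ) (Δt : ℝ)
    (hstep : ∀ m : ℕ, ∀ s ∈ Set.Ico ((m : ℝ) * Δt) (((m : ℝ) + 1) * Δt),
      Φ s = Φ ((m : ℝ) * Δt))
    (m : ℕ) {a b : ℝ} (ha : (m : ℝ) * Δt ≤ a) (hb : b ≤ ((m : ℝ) + 1) * Δt) :
    Φ =ᵐ[volume.restrict (Set.Ioc a b)] (fun _ => Φ ((m : ℝ) * Δt)) := by
  rw [Filter.EventuallyEq, Filter.eventually_iff, mem_ae_iff,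
    Measure.restrict_apply' measurableSet_Ioc]
  refine measure_mono_null ?_ (measure_singleton (((m:ℝ)+1)*Δt))
  rintro s ⟨hs, hsa, hsb⟩
  by_contra hne
  exact hs (hstep m s ⟨le_trans ha hsa.le, lt_of_le_of_ne (hsb.trans hb) hne⟩)

lemma cell_int (Φ : ℝ → ℝ) (Δt : ℝ)
    (hstep : ∀ m : ℕ, ∀ s ∈ Set.Ico ((m : ℝ) * Δt) (((m : ℝ) + 1) * Δt),
      Φ s = Φ ((m : ℝ) * Δt))
    (m : ℕ) {a b : ℝ} (ha : (m : ℝ) * Δt ≤ a) (hab : a ≤ b) (hb : b ≤ ((m : ℝ) + 1) * Δt) :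
    IntervalIntegrable Φ volume a b ∧ ∫ u in a..b, Φ u = (b - a) * Φ ((m : ℝ) * Δt) := by
  have hae := cell_ae Φ Δt hstep m ha hb
  constructor
  · rw [intervalIntegrable_iff_integrableOn_Ioc_of_le hab]
    exact (integrableOn_const measure_Ioc_lt_top.ne).congr_fun_ae hae.symm
  · have : ∫ u in a..b, Φ u = ∫ _ in a..b, Φ ((m : ℝ) * Δt) := by
      apply intervalIntegral.integral_congr_ae
      rw [Set.uIoc_of_le hab]
      exact ae_imp_of_ae_restrict hae
    rw [this, intervalIntegral.integral_const, smul_eq_mul]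

lemma int_zero_n (Φ : ℝ → ℝ) (Δt : ℝ) (hΔt : 0 < Δt)
    (hstep : ∀ m : ℕ, ∀ s ∈ Set.Ico ((m : ℝ) * Δt) (((m : ℝ) + 1) * Δt),
      Φ s = Φ ((m : ℝ) * Δt)) :
    ∀ n : ℕ, IntervalIntegrable Φ volume 0 ((n : ℝ) * Δt) := by
  intro n
  induction n with
  | zero => simp
  | succ n ih =>
    have step : IntervalIntegrable Φ volume ((n:ℝ)*Δt) (((n:ℝ)+1)*Δt) :=
      (cell_int Φ Δt hstep n (le_refl _) (by nlinarith) (le_refl _)).1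
    have hc : ((n:ℝ)+1)*Δt = ((n+1 : ℕ):ℝ)*Δt := by push_cast; ring
    exact ih.trans (hc ▸ step)

lemma int_gen (Φ : ℝ → ℝ) (Δt : ℝ) (hΔt : 0 < Δt)
    (hstep : ∀ m : ℕ, ∀ s ∈ Set.Ico ((m : ℝ) * Δt) (((m : ℝ) + 1) * Δt),
      Φ s = Φ ((m : ℝ) * Δt))
    {a b : ℝ} (ha : 0 ≤ a) (hb : 0 ≤ b) :
    IntervalIntegrable Φ volume a b := by
  set n := ⌈max a b / Δt⌉₊ with hn
  have hmax : max a b ≤ (n : ℝ) * Δt := by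
    have h1 := Nat.le_ceil (max a b / Δt)
    calc max a b = (max a b / Δt) * Δt := by field_simp
    _ ≤ (n : ℝ) * Δt := mul_le_mul_of_nonneg_right h1 hΔt.le
  refine (int_zero_n Φ Δt hΔt hstep n).mono_set ?_
  rw [Set.uIcc_of_le (by positivity : (0:ℝ) ≤ (n:ℝ)*Δt)]
  exact Set.uIcc_subset_Icc ⟨ha, le_trans (le_max_left a b) hmax⟩
    ⟨hb, le_trans (le_max_right a b) hmax⟩

lemma int_pos (Φ : ℝ → ℝ) (Δt : ℝ) (hΔt : 0 < Δt) (hpos : ∀ s : ℝ, 0 < Φ s)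
    (hstep : ∀ m : ℕ, ∀ s ∈ Set.Ico ((m : ℝ) * Δt) (((m : ℝ) + 1) * Δt),
      Φ s = Φ ((m : ℝ) * Δt))
    {a b : ℝ} (ha : 0 ≤ a) (hab : a < b) :
    0 < ∫ u in a..b, Φ u :=
  intervalIntegral.intervalIntegral_pos_of_pos_on
    (int_gen Φ Δt hΔt hstep ha (ha.trans hab.le))
    (fun x _ => hpos x) hab

lemma sum_int (Φ : ℝ → ℝ) (Δt : ℝ) (hΔt : 0 < Δt)
    (hstep : ∀ m : ℕ, ∀ s ∈ Set.Ico ((m : ℝ) * Δt) (((m : ℝ) + 1) * Δt),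
      Φ s = Φ ((m : ℝ) * Δt))
    (t : ℝ) (m0 : ℕ) (ht : t ∈ Set.Ico ((m0 : ℝ) * Δt) (((m0 : ℝ) + 1) * Δt)) :
    ∀ k : ℕ, 1 ≤ k →
      ∫ u in t..(((m0 + k : ℕ) : ℝ) * Δt), Φ u
        = ∑ m ∈ Finset.range k,
            (if m = 0 then (((m0 : ℝ) + 1) * Δt - t) * Φ ((m0 : ℝ) * Δt)
              else Δt * Φ (((m0 : ℝ) + (m : ℝ)) * Δt)) := by
  have ht0 : (0:ℝ) ≤ t := le_trans (by positivity) ht.1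
  intro k hk
  induction k, hk using Nat.le_induction with
  | base =>
    have hc : ((m0 + 1 : ℕ) : ℝ) * Δt = ((m0 : ℝ) + 1) * Δt := by push_cast; ring
    rw [hc, (cell_int Φ Δt hstep m0 ht.1 ht.2.le (le_refl _)).2]
    simp
  | succ k hk ih =>
    have h1 : ((m0 + k : ℕ) : ℝ) * Δt = ((m0 : ℝ) + (k : ℝ)) * Δt := by push_cast; ring
    have h2 : ((m0 + (k+1) : ℕ) : ℝ) * Δt = (((m0 : ℝ) + (k : ℝ)) + 1) * Δt := by
      push_cast; ring
    have hmk : ((m0 : ℝ) + (k : ℝ)) * Δt = (((m0 + k : ℕ)) : ℝ) * Δt := h1.symm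
    have hcell := cell_int Φ Δt hstep (m0 + k) (a := ((m0 + k : ℕ) : ℝ) * Δt)
      (b := ((m0 + (k+1) : ℕ) : ℝ) * Δt) (le_refl _)
      (by rw [h1, h2]; nlinarith) (by rw [h2]; push_cast; ring_nf; exact le_refl _)
    have hint1 : IntervalIntegrable Φ volume t (((m0 + k : ℕ) : ℝ) * Δt) :=
      int_gen Φ Δt hΔt hstep ht0 (by positivity)
    rw [← intervalIntegral.integral_add_adjacent_intervals hint1 hcell.1, ih,
      Finset.sum_range_succ, hcell.2]
    have : (if k = 0 then (((m0 : ℝ) + 1) * Δt - t) * Φ ((m0 : ℝ) * Δt)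
        else Δt * Φ (((m0 : ℝ) + (k : ℝ)) * Δt)) = Δt * Φ (((m0 : ℝ) + (k : ℝ)) * Δt) := by
      rw [if_neg (by omega)]
    rw [this, h1, h2]
    congr 1
    ring

/-- Correctness of Algorithm 4 (time-discrete updates with propensity accumulation):
with accumulation variables `Φ̂₀ = ((m₀+1)Δt - t)Φ(m₀Δt)`, `Φ̂_m = Δt·Φ((m₀+m)Δt)`
(Eq. (11)), if the residual waiting time `τ̃` in the final interval satisfies
`∑_{m<m_τ-m₀} Φ̂_m + τ̃·Φ(m_τΔt) = v` (Eq. (12)) and the stopping condition holds,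
then the resulting event time `t + τ = tσ + τ̃` gives the unique solution `τ > 0` of
`∫_t^{t+τ} Φ = v`. -/
theorem accumulation_algorithm_correct (Φ : ℝ → ℝ) (Δt v : ℝ) (hΔt : 0 < Δt)
    (hv : 0 < v) (hpos : ∀ s : ℝ, 0 < Φ s)
    (hstep : ∀ m : ℕ, ∀ s ∈ Set.Ico ((m : ℝ) * Δt) (((m : ℝ) + 1) * Δt),
      Φ s = Φ ((m : ℝ) * Δt))
    (t : ℝ) (m0 mτ : ℕ) (ht : t ∈ Set.Ico ((m0 : ℝ) * Δt) (((m0 : ℝ) + 1) * Δt))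
    (hm : m0 ≤ mτ)
    (τt : ℝ)
    (heq : (∑ m ∈ Finset.range (mτ - m0),
          (if m = 0 then (((m0 : ℝ) + 1) * Δt - t) * Φ ((m0 : ℝ) * Δt)
            else Δt * Φ (((m0 : ℝ) + (m : ℝ)) * Δt)))
        + τt * Φ ((mτ : ℝ) * Δt) = v)
    (tσ : ℝ) (htσ : tσ = if mτ = m0 then t else (mτ : ℝ) * Δt)
    (hτt : 0 ≤ τt) (hgrid : (mτ : ℝ) * Δt ≤ tσ) (hlt : t < tσ + τt)
    (hub : tσ + τt < ((mτ : ℝ) + 1) * Δt) :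
    (0 < tσ + τt - t ∧ ∫ u in t..(tσ + τt), Φ u = v) ∧
      ∀ τ' : ℝ, 0 < τ' → (∫ u in t..(t + τ'), Φ u = v) → t + τ' = tσ + τt := by
  have ht0 : (0:ℝ) ≤ t := le_trans (by positivity) ht.1
  have hmain : ∫ u in t..(tσ + τt), Φ u = v := by
    by_cases h : mτ = m0
    · subst h
      rw [if_pos rfl] at htσ
      subst htσ
      simp only [Nat.sub_self, Finset.range_zero, Finset.sum_empty, zero_add] at heq
      have := (cell_int Φ Δt hstep mτ ht.1 (le_add_of_nonneg_right hτt) hub.le).2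
      rw [this]
      rw [← heq]; ring
    · rw [if_neg h] at htσ
      subst htσ
      set k := mτ - m0 with hk
      have hk1 : 1 ≤ k := by omega
      have hmk : m0 + k = mτ := by omega
      have hsum := sum_int Φ Δt hΔt hstep t m0 ht k hk1
      rw [hmk] at hsum
      have hcell := cell_int Φ Δt hstep mτ (a := (mτ : ℝ) * Δt) (b := (mτ : ℝ) * Δt + τt)
        (le_refl _) (le_add_of_nonneg_right hτt) hub.le
      have hint1 : IntervalIntegrable Φ volume t ((mτ : ℝ) * Δt) :=
        int_gen Φ Δt hΔt hstep ht0 (by positivity)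
      rw [← intervalIntegral.integral_add_adjacent_intervals hint1 hcell.1, hsum, hcell.2,
        ← heq]
      ring
  refine ⟨⟨by linarith, hmain⟩, ?_⟩
  intro τ' hτ' hint
  by_contra hne
  rcases lt_or_gt_of_ne hne with hlt2 | hgt
  · have hpos2 : 0 < ∫ u in (t + τ')..(tσ + τt), Φ u :=
      int_pos Φ Δt hΔt hpos hstep (by linarith) hlt2
    have hadd := intervalIntegral.integral_add_adjacent_intervals
      (int_gen Φ Δt hΔt hstep ht0 (by linarith) : IntervalIntegrable Φ volume t (t + τ'))
      (int_gen Φ Δt hΔt hstep (by linarith) (by linarith) :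
        IntervalIntegrable Φ volume (t + τ') (tσ + τt))
    rw [hint, hmain] at hadd
    linarith
  · have hpos2 : 0 < ∫ u in (tσ + τt)..(t + τ'), Φ u :=
      int_pos Φ Δt hΔt hpos hstep (by linarith) hgt
    have hadd := intervalIntegral.integral_add_adjacent_intervals
      (int_gen Φ Δt hΔt hstep ht0 (by linarith) : IntervalIntegrable Φ volume t (tσ + τt))
      (int_gen Φ Δt hΔt hstep (by linarith) (by linarith) :
        IntervalIntegrable Φ volume (tσ + τt) (t + τ'))
    rw [hint, hmain] at hadd
    linarith
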